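/- Let q ∈ (1,∞) and κ ≥ 0. There are constants 0 < c ≤ C < ∞ depending only on q such that for all P, Q ∈ ℝ^{N×n} with κ + |P| + |Q| > 0: c (κ+|P|+|Q|)^{q−2} |P−Q|² ≤ (S(P) − S(Q)) : (P − Q) ≤ C (κ+|P|+|Q|)^{q−2} |P−Q|², and likewise c (κ+|P|+|Q|)^{q−2} |P−Q|² ≤ |F(P) − F(Q)|² ≤ C (κ+|P|+|Q|)^{q−2} |P−Q|². -/

import Mathlib

open scoped RealInnerProductSpace

/-!
Write `p = q - 2`, `x = ‖P‖`, `y = ‖Q‖`. Both `(S P - S Q) : (P - Q)` and `‖F P - F Q‖²`, as well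
as `‖P - Q‖²`, are affine functions of `⟪P, Q⟫ ∈ [-x y, x y]`, so each estimate only has to be
checked when `Q` is a nonnegative or a nonpositive multiple of `P`. There everything is expressed
through the radial profile `φ(t) = (κ + t) ^ p * t`, whose derivative
`(κ + t) ^ (p - 1) * (κ + (p + 1) t)` lies between `min 1 (p + 1)` and `max 1 (p + 1)` times
`(κ + t) ^ p`. With the mean value theorem this gives, for `y ≤ x`,
`φ x - φ y ≍ (κ + x) ^ p (x - y)` and `φ x + φ y ≍ (κ + x) ^ p (x + y)`, and finally
`κ + x ≍ κ + x + y`. The estimate for `F` is the one for the exponent `p / 2`, squared.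
-/

namespace Hammer

open Real Set

noncomputable def radial (κ p t : ℝ) : ℝ := (κ + t) ^ p * t

section Radial

variable {κ p x y : ℝ}

lemma hasDerivAt_radial {t : ℝ} (ht : 0 < κ + t) :
    HasDerivAt (radial κ p) ((κ + t) ^ (p - 1) * (κ + (p + 1) * t)) t := by
  refine ((((hasDerivAt_id t).const_add κ).rpow_const (Or.inl ht.ne')).mul
    (hasDerivAt_id t)).congr_deriv ?_
  simp only [id, one_mul, mul_one, rpow_sub_one ht.ne']
  field_simp
  ring

lemma radial_deriv_bounds {t : ℝ} (hκ : 0 ≤ κ) (ht : 0 ≤ t) (hκt : 0 < κ + t) :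
    min 1 (p + 1) * (κ + t) ^ p ≤ (κ + t) ^ (p - 1) * (κ + (p + 1) * t) ∧
      (κ + t) ^ (p - 1) * (κ + (p + 1) * t) ≤ max 1 (p + 1) * (κ + t) ^ p := by
  have hpow : (κ + t) ^ p = (κ + t) ^ (p - 1) * (κ + t) := by
    rw [rpow_sub_one hκt.ne', div_mul_cancel₀ _ hκt.ne']
  have hpos : 0 < (κ + t) ^ (p - 1) := rpow_pos_of_pos hκt _
  rw [hpow]
  constructor
  · have : min 1 (p + 1) * (κ + t) ≤ κ + (p + 1) * t := by
      nlinarith [min_le_left 1 (p + 1), min_le_right 1 (p + 1)]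
    nlinarith
  · have : κ + (p + 1) * t ≤ max 1 (p + 1) * (κ + t) := by
      nlinarith [le_max_left 1 (p + 1), le_max_right 1 (p + 1)]
    nlinarith

lemma min_mul_le_radial_sub (hp : -1 ≤ p) (hκ : 0 ≤ κ) (hy : 0 ≤ y) (hyx : y ≤ x)
    (ha : 0 < κ + x) :
    min 1 (p + 1) * (κ + x) ^ p * (x - y) ≤ radial κ p x - radial κ p y := by
  have hmin : 0 ≤ min 1 (p + 1) := le_min zero_le_one (by linarith)
  rcases le_total 0 p with hp0 | hp0
  · have hba : (κ + y) ^ p ≤ (κ + x) ^ p := rpow_le_rpow (by linarith) (by linarith) hp0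
    have hA : 0 ≤ (κ + x) ^ p := rpow_nonneg ha.le p
    unfold radial
    nlinarith [min_le_left 1 (p + 1), mul_nonneg hA (sub_nonneg.2 hyx)]
  -- for `κ = 0` and `p = -1`, `φ` jumps at `0`, so the mean value theorem needs `0 < κ + y`
  rcases (show 0 ≤ κ + y by linarith).eq_or_lt with hb | hb
  · have hy0 : y = 0 := by linarith
    subst hy0
    have : 0 ≤ (κ + x) ^ p * x := mul_nonneg (rpow_nonneg ha.le p) (by linarith)
    simp only [radial, mul_zero, sub_zero]
    nlinarith [min_le_left 1 (p + 1)]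
  · have hderiv : ∀ t ∈ interior (Icc y x), 0 < κ + t := by
      intro t ht
      rw [interior_Icc] at ht
      linarith [ht.1]
    refine (convex_Icc y x).mul_sub_le_image_sub_of_le_deriv ?_ ?_ ?_ y
      (left_mem_Icc.2 hyx) x (right_mem_Icc.2 hyx) hyx
    · intro t ht
      exact (hasDerivAt_radial (by linarith [ht.1])).continuousAt.continuousWithinAt
    · intro t ht
      exact (hasDerivAt_radial (hderiv t ht)).differentiableAt.differentiableWithinAt
    · intro t ht
      have ht' := interior_Icc (a := y) (b := x) ▸ ht
      rw [(hasDerivAt_radial (hderiv t ht)).deriv]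
      calc min 1 (p + 1) * (κ + x) ^ p ≤ min 1 (p + 1) * (κ + t) ^ p :=
            mul_le_mul_of_nonneg_left
              (rpow_le_rpow_of_nonpos (hderiv t ht) (by linarith [ht'.2]) hp0) hmin
        _ ≤ _ := (radial_deriv_bounds hκ (by linarith [ht'.1]) (hderiv t ht)).1

lemma radial_sub_le_max_mul (hκ : 0 ≤ κ) (hy : 0 ≤ y) (hyx : y ≤ x) (ha : 0 < κ + x) :
    radial κ p x - radial κ p y ≤ max 1 (p + 1) * (κ + x) ^ p * (x - y) := by
  have hmax : 0 ≤ max 1 (p + 1) := zero_le_one.trans (le_max_left _ _)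
  rcases le_total p 0 with hp0 | hp0
  · have hab : (κ + x) ^ p * y ≤ (κ + y) ^ p * y := by
      rcases hy.eq_or_lt with rfl | hy0
      · simp
      exact mul_le_mul_of_nonneg_right
        (rpow_le_rpow_of_nonpos (by linarith) (by linarith) hp0) hy
    have hA : 0 ≤ (κ + x) ^ p := rpow_nonneg ha.le p
    unfold radial
    nlinarith [le_max_left 1 (p + 1), mul_nonneg hA (sub_nonneg.2 hyx)]
  have hderiv : ∀ t ∈ interior (Icc y x), 0 < κ + t := by
    intro t ht
    rw [interior_Icc] at ht
    linarith [ht.1]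
  refine (convex_Icc y x).image_sub_le_mul_sub_of_deriv_le ?_ ?_ ?_ y
    (left_mem_Icc.2 hyx) x (right_mem_Icc.2 hyx) hyx
  · exact (((continuous_const.add continuous_id).rpow_const fun _ => Or.inr hp0).mul
      continuous_id).continuousOn
  · intro t ht
    exact (hasDerivAt_radial (hderiv t ht)).differentiableAt.differentiableWithinAt
  · intro t ht
    have ht' := interior_Icc (a := y) (b := x) ▸ ht
    rw [(hasDerivAt_radial (hderiv t ht)).deriv]
    calc _ ≤ max 1 (p + 1) * (κ + t) ^ p :=
          (radial_deriv_bounds hκ (by linarith [ht'.1]) (hderiv t ht)).2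
      _ ≤ max 1 (p + 1) * (κ + x) ^ p :=
          mul_le_mul_of_nonneg_left
            (rpow_le_rpow (hderiv t ht).le (by linarith [ht'.2]) hp0) hmax

lemma radial_add_bounds (hp : -1 ≤ p) (hκ : 0 ≤ κ) (hy : 0 ≤ y) (hyx : y ≤ x)
    (ha : 0 < κ + x) :
    1 / 2 * (κ + x) ^ p * (x + y) ≤ radial κ p x + radial κ p y ∧
      radial κ p x + radial κ p y ≤ 2 * (κ + x) ^ p * (x + y) := by
  have hxy : radial κ p y ≤ radial κ p x := by
    have := min_mul_le_radial_sub hp hκ hy hyx ha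
    have : 0 ≤ min 1 (p + 1) * (κ + x) ^ p * (x - y) :=
      mul_nonneg (mul_nonneg (le_min zero_le_one (by linarith)) (rpow_nonneg ha.le p))
        (by linarith)
    linarith
  have hA : 0 ≤ (κ + x) ^ p := rpow_nonneg ha.le p
  have hy' : 0 ≤ radial κ p y := mul_nonneg (rpow_nonneg (by linarith) p) hy
  unfold radial at *
  constructor <;> nlinarith [mul_nonneg hA hy, mul_nonneg hA (sub_nonneg.2 hyx)]

end Radial

lemma rpow_le_two_rpow_abs_mul_rpow {a b p : ℝ} (hb : 0 < b) (hab : a ≤ 2 * b)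
    (hba : b ≤ 2 * a) : a ^ p ≤ 2 ^ |p| * b ^ p := by
  have ha : 0 < a := by linarith
  rcases le_total 0 p with hp | hp
  · rw [abs_of_nonneg hp, ← mul_rpow zero_le_two hb.le]
    exact rpow_le_rpow ha.le hab hp
  · rw [abs_of_nonpos hp, rpow_neg zero_le_two, ← div_eq_inv_mul, ← div_rpow hb.le zero_le_two]
    exact rpow_le_rpow_of_nonpos (by positivity) (by linarith) hp

noncomputable def lowerConst (p : ℝ) : ℝ := min 1 (p + 1) / 2 / 2 ^ |p|

noncomputable def upperConst (p : ℝ) : ℝ := 2 * max 1 (p + 1) * 2 ^ |p|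

lemma lowerConst_pos {p : ℝ} (hp : -1 < p) : 0 < lowerConst p := by
  have : 0 < min 1 (p + 1) := lt_min one_pos (by linarith)
  unfold lowerConst
  positivity

lemma lowerConst_nonneg {p : ℝ} (hp : -1 ≤ p) : 0 ≤ lowerConst p := by
  have : 0 ≤ min 1 (p + 1) := le_min zero_le_one (by linarith)
  unfold lowerConst
  positivity

lemma lowerConst_le_upperConst (p : ℝ) : lowerConst p ≤ upperConst p := by
  have hK : 1 ≤ (2 : ℝ) ^ |p| := one_le_rpow one_le_two (abs_nonneg p)
  have h₁ : lowerConst p ≤ 1 := by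
    unfold lowerConst
    rw [div_le_one (by positivity)]
    linarith [min_le_left 1 (p + 1)]
  have h₂ : 1 ≤ upperConst p := by
    unfold upperConst
    nlinarith [le_max_left 1 (p + 1)]
  linarith

lemma radial_bounds {κ p x y : ℝ} (hp : -1 ≤ p) (hκ : 0 ≤ κ) (hy : 0 ≤ y) (hyx : y ≤ x)
    (ha : 0 < κ + x) :
    lowerConst p * (κ + x + y) ^ p * (x - y) ≤ radial κ p x - radial κ p y ∧
      radial κ p x - radial κ p y ≤ upperConst p * (κ + x + y) ^ p * (x - y) ∧
      lowerConst p * (κ + x + y) ^ p * (x + y) ≤ radial κ p x + radial κ p y ∧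
      radial κ p x + radial κ p y ≤ upperConst p * (κ + x + y) ^ p * (x + y) := by
  have hK : 0 < (2 : ℝ) ^ |p| := by positivity
  have hmin : 0 ≤ min 1 (p + 1) := le_min zero_le_one (by linarith)
  have hA : 0 ≤ (κ + x) ^ p := rpow_nonneg ha.le p
  have hlow : lowerConst p * (κ + x + y) ^ p ≤ min 1 (p + 1) / 2 * (κ + x) ^ p := by
    have := rpow_le_two_rpow_abs_mul_rpow (a := κ + x + y) (p := p) ha (by linarith)
      (by linarith)
    rw [lowerConst, div_mul_eq_mul_div, div_le_iff₀ hK]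
    nlinarith
  have hup : 2 * max 1 (p + 1) * (κ + x) ^ p ≤ upperConst p * (κ + x + y) ^ p := by
    have := rpow_le_two_rpow_abs_mul_rpow (a := κ + x) (b := κ + x + y) (p := p) (by linarith)
      (by linarith) (by linarith)
    rw [upperConst]
    nlinarith [le_max_left 1 (p + 1)]
  have hsub₁ := min_mul_le_radial_sub hp hκ hy hyx ha
  have hsub₂ := radial_sub_le_max_mul (p := p) hκ hy hyx ha
  obtain ⟨hadd₁, hadd₂⟩ := radial_add_bounds hp hκ hy hyx ha
  have hxy : 0 ≤ x - y := sub_nonneg.2 hyx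
  have hxy' : 0 ≤ x + y := by linarith
  refine ⟨?_, ?_, ?_, ?_⟩
  · nlinarith [mul_le_mul_of_nonneg_right hlow hxy, mul_nonneg hmin (mul_nonneg hA hxy)]
  · nlinarith [mul_le_mul_of_nonneg_right hup hxy, le_max_left 1 (p + 1), mul_nonneg hA hxy]
  · nlinarith [mul_le_mul_of_nonneg_right hlow hxy', min_le_left 1 (p + 1),
      mul_nonneg hA hxy']
  · nlinarith [mul_le_mul_of_nonneg_right hup hxy', le_max_left 1 (p + 1),
      mul_nonneg hA hxy']

section InnerProductSpace

variable {E : Type*} [NormedAddCommGroup E] [InnerProductSpace ℝ E]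

lemma add_mul_inner_nonneg_of_extremes {A B : ℝ} (P Q : E)
    (hopp : 0 ≤ A + B * (‖P‖ * ‖Q‖)) (hsame : 0 ≤ A - B * (‖P‖ * ‖Q‖)) :
    0 ≤ A + B * ⟪P, Q⟫ := by
  obtain ⟨h₁, h₂⟩ := abs_le.1 (abs_real_inner_le_norm P Q)
  rcases le_total 0 B with hB | hB <;> nlinarith

lemma inner_smul_sub_smul_sub (s t : ℝ) (P Q : E) :
    ⟪s • P - t • Q, P - Q⟫ = s * ‖P‖ ^ 2 + t * ‖Q‖ ^ 2 - (s + t) * ⟪P, Q⟫ := by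
  simp only [inner_sub_left, inner_sub_right, real_inner_smul_left,
    real_inner_self_eq_norm_sq, real_inner_comm P Q]
  ring

lemma norm_smul_sub_smul_sq (s t : ℝ) (P Q : E) :
    ‖s • P - t • Q‖ ^ 2 = s ^ 2 * ‖P‖ ^ 2 + t ^ 2 * ‖Q‖ ^ 2 - 2 * (s * t) * ⟪P, Q⟫ := by
  rw [norm_sub_sq_real, real_inner_smul_left, real_inner_smul_right, norm_smul, norm_smul,
    mul_pow, mul_pow, Real.norm_eq_abs, Real.norm_eq_abs, sq_abs, sq_abs]
  ring

variable {m s t : ℝ} {P Q : E}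

lemma mul_norm_sub_sq_le_inner_smul_sub_smul
    (hsame : m * (‖P‖ - ‖Q‖) ^ 2 ≤ (s * ‖P‖ - t * ‖Q‖) * (‖P‖ - ‖Q‖))
    (hopp : m * (‖P‖ + ‖Q‖) ^ 2 ≤ (s * ‖P‖ + t * ‖Q‖) * (‖P‖ + ‖Q‖)) :
    m * ‖P - Q‖ ^ 2 ≤ ⟪s • P - t • Q, P - Q⟫ := by
  have := add_mul_inner_nonneg_of_extremes P Q
    (A := s * ‖P‖ ^ 2 + t * ‖Q‖ ^ 2 - m * (‖P‖ ^ 2 + ‖Q‖ ^ 2)) (B := 2 * m - (s + t))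
    (by linarith) (by linarith)
  rw [norm_sub_sq_real, inner_smul_sub_smul_sub]
  linarith

lemma inner_smul_sub_smul_le_mul_norm_sub_sq
    (hsame : (s * ‖P‖ - t * ‖Q‖) * (‖P‖ - ‖Q‖) ≤ m * (‖P‖ - ‖Q‖) ^ 2)
    (hopp : (s * ‖P‖ + t * ‖Q‖) * (‖P‖ + ‖Q‖) ≤ m * (‖P‖ + ‖Q‖) ^ 2) :
    ⟪s • P - t • Q, P - Q⟫ ≤ m * ‖P - Q‖ ^ 2 := by
  have := add_mul_inner_nonneg_of_extremes P Q
    (A := m * (‖P‖ ^ 2 + ‖Q‖ ^ 2) - s * ‖P‖ ^ 2 - t * ‖Q‖ ^ 2) (B := (s + t) - 2 * m)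
    (by linarith) (by linarith)
  rw [norm_sub_sq_real, inner_smul_sub_smul_sub]
  linarith

lemma mul_norm_sub_sq_le_norm_smul_sub_smul_sq
    (hsame : m * (‖P‖ - ‖Q‖) ^ 2 ≤ (s * ‖P‖ - t * ‖Q‖) ^ 2)
    (hopp : m * (‖P‖ + ‖Q‖) ^ 2 ≤ (s * ‖P‖ + t * ‖Q‖) ^ 2) :
    m * ‖P - Q‖ ^ 2 ≤ ‖s • P - t • Q‖ ^ 2 := by
  have := add_mul_inner_nonneg_of_extremes P Q
    (A := s ^ 2 * ‖P‖ ^ 2 + t ^ 2 * ‖Q‖ ^ 2 - m * (‖P‖ ^ 2 + ‖Q‖ ^ 2))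
    (B := 2 * m - 2 * (s * t)) (by linarith) (by linarith)
  rw [norm_smul_sub_smul_sq, norm_sub_sq_real]
  linarith

lemma norm_smul_sub_smul_sq_le_mul_norm_sub_sq
    (hsame : (s * ‖P‖ - t * ‖Q‖) ^ 2 ≤ m * (‖P‖ - ‖Q‖) ^ 2)
    (hopp : (s * ‖P‖ + t * ‖Q‖) ^ 2 ≤ m * (‖P‖ + ‖Q‖) ^ 2) :
    ‖s • P - t • Q‖ ^ 2 ≤ m * ‖P - Q‖ ^ 2 := by
  have := add_mul_inner_nonneg_of_extremes P Q
    (A := m * (‖P‖ ^ 2 + ‖Q‖ ^ 2) - s ^ 2 * ‖P‖ ^ 2 - t ^ 2 * ‖Q‖ ^ 2)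
    (B := 2 * (s * t) - 2 * m) (by linarith) (by linarith)
  rw [norm_smul_sub_smul_sq, norm_sub_sq_real]
  linarith

variable {p κ : ℝ}

theorem inner_rpow_smul_sub_bounds (hp : -1 ≤ p) (hκ : 0 ≤ κ) (P Q : E)
    (hM : 0 < κ + ‖P‖ + ‖Q‖) :
    lowerConst p * (κ + ‖P‖ + ‖Q‖) ^ p * ‖P - Q‖ ^ 2 ≤
        ⟪(κ + ‖P‖) ^ p • P - (κ + ‖Q‖) ^ p • Q, P - Q⟫ ∧
      ⟪(κ + ‖P‖) ^ p • P - (κ + ‖Q‖) ^ p • Q, P - Q⟫ ≤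
        upperConst p * (κ + ‖P‖ + ‖Q‖) ^ p * ‖P - Q‖ ^ 2 := by
  wlog hQP : ‖Q‖ ≤ ‖P‖ generalizing P Q
  · have h := this Q P (by linarith) (le_of_not_ge hQP)
    rwa [add_right_comm, norm_sub_rev Q P, ← neg_sub P Q, ← neg_sub ((κ + ‖P‖) ^ p • P),
      inner_neg_neg] at h
  obtain ⟨hsub₁, hsub₂, hadd₁, hadd₂⟩ :=
    radial_bounds hp hκ (norm_nonneg Q) hQP (by linarith [norm_nonneg Q])
  have hsub : 0 ≤ ‖P‖ - ‖Q‖ := sub_nonneg.2 hQP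
  have hadd : 0 ≤ ‖P‖ + ‖Q‖ := by positivity
  unfold radial at *
  exact ⟨mul_norm_sub_sq_le_inner_smul_sub_smul
      (by linarith [mul_le_mul_of_nonneg_right hsub₁ hsub])
      (by linarith [mul_le_mul_of_nonneg_right hadd₁ hadd]),
    inner_smul_sub_smul_le_mul_norm_sub_sq
      (by linarith [mul_le_mul_of_nonneg_right hsub₂ hsub])
      (by linarith [mul_le_mul_of_nonneg_right hadd₂ hadd])⟩

theorem norm_rpow_smul_sub_sq_bounds (hp : -2 ≤ p) (hκ : 0 ≤ κ) (P Q : E)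
    (hM : 0 < κ + ‖P‖ + ‖Q‖) :
    lowerConst (p / 2) ^ 2 * (κ + ‖P‖ + ‖Q‖) ^ p * ‖P - Q‖ ^ 2 ≤
        ‖(κ + ‖P‖) ^ (p / 2) • P - (κ + ‖Q‖) ^ (p / 2) • Q‖ ^ 2 ∧
      ‖(κ + ‖P‖) ^ (p / 2) • P - (κ + ‖Q‖) ^ (p / 2) • Q‖ ^ 2 ≤
        upperConst (p / 2) ^ 2 * (κ + ‖P‖ + ‖Q‖) ^ p * ‖P - Q‖ ^ 2 := by
  wlog hQP : ‖Q‖ ≤ ‖P‖ generalizing P Q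
  · have h := this Q P (by linarith) (le_of_not_ge hQP)
    rwa [add_right_comm, norm_sub_rev Q P, norm_sub_rev ((κ + ‖Q‖) ^ (p / 2) • Q)] at h
  obtain ⟨hsub₁, hsub₂, hadd₁, hadd₂⟩ :=
    radial_bounds (p := p / 2) (by linarith) hκ (norm_nonneg Q) hQP
      (by linarith [norm_nonneg Q])
  have hsub : 0 ≤ ‖P‖ - ‖Q‖ := sub_nonneg.2 hQP
  have hadd : 0 ≤ ‖P‖ + ‖Q‖ := by positivity
  have hsqrt : ((κ + ‖P‖ + ‖Q‖) ^ (p / 2)) ^ 2 = (κ + ‖P‖ + ‖Q‖) ^ p := by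
    rw [← rpow_natCast, ← rpow_mul hM.le]
    norm_num
  have hc : 0 ≤ lowerConst (p / 2) * (κ + ‖P‖ + ‖Q‖) ^ (p / 2) :=
    mul_nonneg (lowerConst_nonneg (by linarith)) (rpow_nonneg hM.le _)
  have hsq (k w : ℝ) :
      k ^ 2 * (κ + ‖P‖ + ‖Q‖) ^ p * w ^ 2 = (k * (κ + ‖P‖ + ‖Q‖) ^ (p / 2) * w) ^ 2 := by
    rw [mul_pow, mul_pow, hsqrt]
  unfold radial at *
  refine ⟨mul_norm_sub_sq_le_norm_smul_sub_smul_sq ?_ ?_,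
    norm_smul_sub_smul_sq_le_mul_norm_sub_sq ?_ ?_⟩ <;> rw [hsq]
  · exact pow_le_pow_left₀ (mul_nonneg hc hsub) hsub₁ 2
  · exact pow_le_pow_left₀ (mul_nonneg hc hadd) hadd₁ 2
  · exact pow_le_pow_left₀ ((mul_nonneg hc hsub).trans hsub₁) hsub₂ 2
  · exact pow_le_pow_left₀ ((mul_nonneg hc hadd).trans hadd₁) hadd₂ 2

end InnerProductSpace

end Hammer

open Hammer in
theorem stmt11 (N n : ℕ) (q : ℝ) (hq : 1 < q) :
    ∃ c C : ℝ, 0 < c ∧ c ≤ C ∧ ∀ κ : ℝ, 0 ≤ κ →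
      ∀ P Q : EuclideanSpace ℝ (Fin N × Fin n), 0 < κ + ‖P‖ + ‖Q‖ →
        (c * (κ + ‖P‖ + ‖Q‖) ^ (q - 2) * ‖P - Q‖ ^ 2 ≤
            ⟪(κ + ‖P‖) ^ (q - 2) • P - (κ + ‖Q‖) ^ (q - 2) • Q, P - Q⟫ ∧
          ⟪(κ + ‖P‖) ^ (q - 2) • P - (κ + ‖Q‖) ^ (q - 2) • Q, P - Q⟫ ≤
            C * (κ + ‖P‖ + ‖Q‖) ^ (q - 2) * ‖P - Q‖ ^ 2) ∧
        (c * (κ + ‖P‖ + ‖Q‖) ^ (q - 2) * ‖P - Q‖ ^ 2 ≤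
            ‖(κ + ‖P‖) ^ ((q - 2) / 2) • P - (κ + ‖Q‖) ^ ((q - 2) / 2) • Q‖ ^ 2 ∧
          ‖(κ + ‖P‖) ^ ((q - 2) / 2) • P - (κ + ‖Q‖) ^ ((q - 2) / 2) • Q‖ ^ 2 ≤
            C * (κ + ‖P‖ + ‖Q‖) ^ (q - 2) * ‖P - Q‖ ^ 2) := by
  refine ⟨min (lowerConst (q - 2)) (lowerConst ((q - 2) / 2) ^ 2),
    max (upperConst (q - 2)) (upperConst ((q - 2) / 2) ^ 2),
    lt_min (lowerConst_pos (by linarith)) (pow_pos (lowerConst_pos (by linarith)) 2),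
    (min_le_left _ _).trans ((lowerConst_le_upperConst _).trans (le_max_left _ _)),
    fun κ hκ P Q hM => ?_⟩
  obtain ⟨hS₁, hS₂⟩ := inner_rpow_smul_sub_bounds (p := q - 2) (by linarith) hκ P Q hM
  obtain ⟨hF₁, hF₂⟩ := norm_rpow_smul_sub_sq_bounds (p := q - 2) (by linarith) hκ P Q hM
  refine ⟨⟨le_trans ?_ hS₁, hS₂.trans ?_⟩, le_trans ?_ hF₁, hF₂.trans ?_⟩ <;> gcongr
  · exact min_le_left _ _
  · exact le_max_left _ _
  · exact min_le_right _ _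
  · exact le_max_right _ _
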